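/- arXiv:2007.06310 — 3 statements merged into one kernel-verified Lean document; each statement's English description precedes it below -/
import Mathlib

section
/- If a weight sequence M satisfies condition (β_2) — for every ε > 0 there exists an integer k > 1 such that limsup_{p→∞} (M_{kp}/M_p)^{1/((k-1)p)} / m_{kp-1} ≤ ε — then lim_{n→∞} m_n / (M_n)^{1/n} = ∞. -/
open Filter

theorem beta2_implies_quotient_root_ratio_tendsto (M : ℕ → ℝ)
    (hpos : ∀ p, 0 < M p) (hM0 : M 0 = 1)
    (hlc : ∀ p : ℕ, 1 ≤ p → (M p) ^ 2 ≤ M (p - 1) * M (p + 1))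
    (hinf : Tendsto (fun p : ℕ => M (p + 1) / M p) atTop atTop)
    (hβ2 : ∀ ε > (0 : ℝ), ∃ k : ℕ, 1 < k ∧
      limsup (fun p : ℕ =>
        (M (k * p) / M p) ^ (((k : ℝ) - 1) * p)⁻¹ / (M (k * p) / M (k * p - 1))) atTop ≤ ε) :
    Tendsto (fun n : ℕ => (M (n + 1) / M n) / (M n) ^ ((n : ℝ))⁻¹) atTop atTop := by
  have hmpos : ∀ n : ℕ, 0 < M (n + 1) / M n := fun n => div_pos (hpos _) (hpos _)
  have hmmono : Monotone (fun n : ℕ => M (n + 1) / M n) := by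
    apply monotone_nat_of_le_succ
    intro n
    have h := hlc (n + 1) (by omega)
    simp only [Nat.add_sub_cancel] at h
    rw [div_le_div_iff₀ (hpos n) (hpos (n + 1))]
    nlinarith [hpos n, hpos (n + 1), hpos (n + 2)]
  have hdm0 : ∀ a b : ℕ, M a * (M b / M a) = M b := fun a b => by
    rw [mul_comm]; exact div_mul_cancel₀ _ (hpos a).ne'
  -- upper bound on products of quotients
  have L0 : ∀ a j : ℕ, M (a + j) ≤ M a * (M (a + j + 1) / M (a + j)) ^ j := by
    intro a j
    induction j with
    | zero => simp
    | succ j ih =>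
      have hmono' : M (a + j + 1) / M (a + j) ≤ M (a + j + 2) / M (a + j + 1) :=
        hmmono (Nat.le_succ (a + j))
      have key : M (a + j + 1) = M (a + j) * (M (a + j + 1) / M (a + j)) :=
        (hdm0 _ _).symm
      show M (a + j + 1) ≤ M a * (M (a + j + 2) / M (a + j + 1)) ^ (j + 1)
      calc M (a + j + 1) = M (a + j) * (M (a + j + 1) / M (a + j)) := key
        _ ≤ (M a * (M (a + j + 1) / M (a + j)) ^ j) * (M (a + j + 1) / M (a + j)) :=
            mul_le_mul_of_nonneg_right ih (hmpos (a + j)).le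
        _ = M a * (M (a + j + 1) / M (a + j)) ^ (j + 1) := by ring
        _ ≤ M a * (M (a + j + 2) / M (a + j + 1)) ^ (j + 1) := by
            apply mul_le_mul_of_nonneg_left _ (hpos a).le
            exact pow_le_pow_left₀ (hmpos (a + j)).le hmono' _
  -- supermultiplicativity
  have L2 : ∀ a p : ℕ, M a * M p ≤ M (a + p) := by
    intro a p
    induction p with
    | zero => simp [hM0]
    | succ p ih =>
      have h1 : M p * (M (p + 1) / M p) = M (p + 1) := hdm0 _ _
      have h2 : M (a + p) * (M (a + p + 1) / M (a + p)) = M (a + p + 1) := hdm0 _ _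
      show M a * M (p + 1) ≤ M (a + p + 1)
      calc M a * M (p + 1) = (M a * M p) * (M (p + 1) / M p) := by
            rw [mul_assoc, h1]
        _ ≤ M (a + p) * (M (p + 1) / M p) :=
            mul_le_mul_of_nonneg_right ih (hmpos p).le
        _ ≤ M (a + p) * (M (a + p + 1) / M (a + p)) :=
            mul_le_mul_of_nonneg_left (hmmono (Nat.le_add_left p a)) (hpos _).le
        _ = M (a + p + 1) := h2
  have L2k : ∀ c p : ℕ, M p ^ c ≤ M (c * p) := by
    intro c p
    induction c with
    | zero => simp [hM0]
    | succ c ih =>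
      calc M p ^ (c + 1) = M p ^ c * M p := pow_succ _ _
        _ ≤ M (c * p) * M p := mul_le_mul_of_nonneg_right ih (hpos p).le
        _ ≤ M (c * p + p) := L2 _ _
        _ = M ((c + 1) * p) := by rw [Nat.succ_mul]
  rw [tendsto_atTop]
  intro A
  set B : ℝ := max A 1 with hBdef
  have hB1 : (1 : ℝ) ≤ B := le_max_right _ _
  have hAB : A ≤ B := le_max_left _ _
  have hBpos : (0 : ℝ) < B := lt_of_lt_of_le one_pos hB1
  have hε : (0 : ℝ) < (2 * B ^ 2)⁻¹ := by positivity
  obtain ⟨k, hk, hsup⟩ := hβ2 _ hε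
  set ε' : ℝ := (B ^ 2)⁻¹ with hε'def
  have hε'pos : (0 : ℝ) < ε' := by positivity
  have hε'le1 : ε' ≤ 1 := by
    have h12 : (1 : ℝ) ≤ B ^ 2 := by nlinarith
    have hinv : ε' * B ^ 2 = 1 := by rw [hε'def]; field_simp
    nlinarith [hε'pos]
  have hεε' : (2 * B ^ 2)⁻¹ < ε' := by
    rw [hε'def]
    apply inv_strictAnti₀ (by positivity)
    nlinarith
  -- boundedness of the limsup sequence
  have hub : ∀ᶠ p : ℕ in atTop,
      (M (k * p) / M p) ^ (((k : ℝ) - 1) * p)⁻¹ / (M (k * p) / M (k * p - 1)) ≤ 1 := by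
    filter_upwards [eventually_ge_atTop 1] with p hp
    set c : ℕ := (k - 1) * p with hcdef
    have hc1 : 1 ≤ c := Nat.one_le_iff_ne_zero.2 (Nat.mul_ne_zero (by omega) (by omega))
    have hple : p ≤ k * p := Nat.le_mul_of_pos_left p (by omega)
    have hc : c + p = k * p := by
      rw [hcdef, Nat.sub_one_mul, Nat.sub_add_cancel hple]
    obtain ⟨q, hq⟩ : ∃ q, k * p = q := ⟨_, rfl⟩
    rw [hq] at hc hple ⊢
    have hx : 0 < M q / M p := div_pos (hpos _) (hpos _)
    have hmq : 0 < M q / M (q - 1) := div_pos (hpos _) (hpos _)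
    have hcR : ((c : ℕ) : ℝ) = ((k : ℝ) - 1) * p := by
      rw [hcdef, Nat.cast_mul, Nat.cast_sub (by omega : 1 ≤ k), Nat.cast_one]
    have hcRpos : (0 : ℝ) < ((k : ℝ) - 1) * p := by
      have h1 : (1 : ℝ) < (k : ℝ) := by exact_mod_cast hk
      have h2 : (0 : ℝ) < (p : ℝ) := by exact_mod_cast hp
      nlinarith
    -- M q ≤ M p * (M q / M (q-1)) ^ c
    have hL := L0 p (c - 1)
    rw [show p + (c - 1) = q - 1 by omega, show q - 1 + 1 = q by omega,
        show c - 1 = c - 1 from rfl] at hL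
    have hMq : M q = M (q - 1) * (M q / M (q - 1)) := (hdm0 _ _).symm
    have hub0 : M q ≤ M p * (M q / M (q - 1)) ^ c := by
      calc M q = M (q - 1) * (M q / M (q - 1)) := hMq
        _ ≤ (M p * (M q / M (q - 1)) ^ (c - 1)) * (M q / M (q - 1)) :=
            mul_le_mul_of_nonneg_right hL hmq.le
        _ = M p * (M q / M (q - 1)) ^ (c - 1 + 1) := by rw [mul_assoc, ← pow_succ]
        _ = M p * (M q / M (q - 1)) ^ c := by rw [Nat.sub_add_cancel hc1]
    have hxle : M q / M p ≤ (M q / M (q - 1)) ^ c := by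
      rw [div_le_iff₀ (hpos p)]
      calc M q ≤ M p * (M q / M (q - 1)) ^ c := hub0
        _ = (M q / M (q - 1)) ^ c * M p := by ring
    rw [div_le_one hmq]
    calc (M q / M p) ^ (((k : ℝ) - 1) * ↑p)⁻¹
        ≤ ((M q / M (q - 1)) ^ c) ^ (((k : ℝ) - 1) * ↑p)⁻¹ :=
          Real.rpow_le_rpow hx.le hxle (by positivity)
      _ = M q / M (q - 1) := by
          rw [← Real.rpow_natCast (M q / M (q - 1)) c, ← Real.rpow_mul hmq.le,
            hcR, mul_inv_cancel₀ (ne_of_gt hcRpos), Real.rpow_one]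
  have hbdd : IsBoundedUnder (· ≤ ·) atTop
      (fun p : ℕ => (M (k * p) / M p) ^ (((k : ℝ) - 1) * p)⁻¹ / (M (k * p) / M (k * p - 1))) :=
    isBoundedUnder_of_eventually_le hub
  have hev : ∀ᶠ p : ℕ in atTop,
      (M (k * p) / M p) ^ (((k : ℝ) - 1) * p)⁻¹ / (M (k * p) / M (k * p - 1)) < ε' :=
    eventually_lt_of_limsup_lt (lt_of_le_of_lt hsup hεε') hbdd
  rw [eventually_atTop] at hev
  obtain ⟨P, hP⟩ := hev
  filter_upwards [eventually_ge_atTop (k * (P + 2))] with n hn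
  set p : ℕ := n / k with hpdef
  have hk0 : 0 < k := by omega
  have hp2 : P + 2 ≤ p := by
    rw [hpdef]
    exact (Nat.le_div_iff_mul_le hk0).2 (le_trans (le_of_eq (Nat.mul_comm (P + 2) k)) hn)
  have hp1 : 1 ≤ p := by omega
  have hdm := Nat.div_add_mod n k
  have hmlt := Nat.mod_lt n hk0
  have hq_le : k * p ≤ n := Nat.le.intro hdm
  have hn_lt : n < k * p + k := by
    calc n = k * p + n % k := hdm.symm
      _ < k * p + k := Nat.add_lt_add_left hmlt _
  have hk_le : k ≤ k * p := Nat.le_mul_of_pos_right k hp1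
  set c : ℕ := (k - 1) * p with hcdef
  have hc1 : 1 ≤ c := Nat.one_le_iff_ne_zero.2 (Nat.mul_ne_zero (by omega) (by omega))
  have hple : p ≤ k * p := Nat.le_mul_of_pos_left p hk0
  have hc : c + p = k * p := by
    rw [hcdef, Nat.sub_one_mul, Nat.sub_add_cancel hple]
  have hup := hP p (by omega)
  have hMpk : M p ^ k ≤ M (k * p) := L2k k p
  obtain ⟨q, hqeq⟩ : ∃ q, k * p = q := ⟨_, rfl⟩
  rw [hqeq] at hup hMpk hc hq_le hn_lt hk_le hple
  have hq1 : 1 ≤ q := by omega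
  have hn0 : n ≠ 0 := by omega
  have hnR : (0 : ℝ) < (n : ℝ) := by exact_mod_cast Nat.pos_of_ne_zero hn0
  have hx : 0 < M q / M p := div_pos (hpos _) (hpos _)
  have hmq : 0 < M q / M (q - 1) := div_pos (hpos _) (hpos _)
  have hmn : 0 < M (n + 1) / M n := hmpos n
  have hcR : ((c : ℕ) : ℝ) = ((k : ℝ) - 1) * p := by
    rw [hcdef, Nat.cast_mul, Nat.cast_sub (by omega : 1 ≤ k), Nat.cast_one]
  have hcRpos : (0 : ℝ) < ((k : ℝ) - 1) * p := by
    have h1 : (1 : ℝ) < (k : ℝ) := by exact_mod_cast hk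
    have h2 : (0 : ℝ) < (p : ℝ) := by exact_mod_cast hp1
    nlinarith
  set e : ℝ := (((k : ℝ) - 1) * p)⁻¹ with hedef
  have hepos : 0 < e := by rw [hedef]; exact inv_pos.2 hcRpos
  set Q : ℝ := (M q / M p) ^ e with hQdef
  have hQpos : 0 < Q := Real.rpow_pos_of_pos hx e
  have hQc : Q ^ c = M q / M p := by
    rw [hQdef, ← Real.rpow_natCast ((M q / M p) ^ e) c, ← Real.rpow_mul hx.le,
      hcR, hedef, inv_mul_cancel₀ (ne_of_gt hcRpos), Real.rpow_one]
  -- M p ≤ Q ^ p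
  have hx_ge : M p ^ (k - 1) ≤ M q / M p := by
    rw [le_div_iff₀ (hpos p)]
    calc M p ^ (k - 1) * M p = M p ^ (k - 1 + 1) := (pow_succ _ _).symm
      _ = M p ^ k := by rw [Nat.sub_add_cancel (by omega : 1 ≤ k)]
      _ ≤ M q := hMpk
  have hMpQ : M p ≤ Q ^ p := by
    apply le_of_pow_le_pow_left₀ (show k - 1 ≠ 0 by omega) (pow_nonneg hQpos.le p)
    calc M p ^ (k - 1) ≤ M q / M p := hx_ge
      _ = Q ^ c := hQc.symm
      _ = (Q ^ p) ^ (k - 1) := by rw [← pow_mul, hcdef, Nat.mul_comm]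
  -- Q < ε' * m n
  have hq_eq : M q / M (q - 1) = M (q - 1 + 1) / M (q - 1) := by
    rw [Nat.sub_add_cancel hq1]
  have hQ_lt : Q < ε' * (M (n + 1) / M n) := by
    rw [div_lt_iff₀ hmq] at hup
    have hmono2 : M q / M (q - 1) ≤ M (n + 1) / M n := by
      rw [hq_eq]; exact hmmono (by omega : q - 1 ≤ n)
    calc Q < ε' * (M q / M (q - 1)) := hup
      _ ≤ ε' * (M (n + 1) / M n) := mul_le_mul_of_nonneg_left hmono2 hε'pos.le
  -- key estimate : M n ≤ ε'^q * (m n)^n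
  have hL := L0 q (n - q)
  rw [show q + (n - q) = n by omega] at hL
  have hMq_eq : M q = M p * Q ^ c := by
    rw [hQc]; exact (hdm0 _ _).symm
  have key : M n ≤ ε' ^ q * (M (n + 1) / M n) ^ n := by
    calc M n ≤ M q * (M (n + 1) / M n) ^ (n - q) := hL
      _ = M p * Q ^ c * (M (n + 1) / M n) ^ (n - q) := by rw [hMq_eq]
      _ ≤ Q ^ p * Q ^ c * (M (n + 1) / M n) ^ (n - q) := by
          apply mul_le_mul_of_nonneg_right _ (by positivity)
          exact mul_le_mul_of_nonneg_right hMpQ (by positivity)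
      _ = Q ^ q * (M (n + 1) / M n) ^ (n - q) := by
          rw [← pow_add, Nat.add_comm p c, hc]
      _ ≤ (ε' * (M (n + 1) / M n)) ^ q * (M (n + 1) / M n) ^ (n - q) := by
          apply mul_le_mul_of_nonneg_right _ (by positivity)
          exact pow_le_pow_left₀ hQpos.le hQ_lt.le q
      _ = ε' ^ q * ((M (n + 1) / M n) ^ q * (M (n + 1) / M n) ^ (n - q)) := by
          rw [mul_pow]; ring
      _ = ε' ^ q * (M (n + 1) / M n) ^ n := by
          rw [← pow_add, Nat.add_sub_cancel' hq_le]
  -- take n-th roots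
  have hroot : M n ^ ((n : ℝ))⁻¹ ≤ ε' ^ ((q : ℝ) * ((n : ℝ))⁻¹) * (M (n + 1) / M n) := by
    have h1 : M n ^ ((n : ℝ))⁻¹ ≤ (ε' ^ q * (M (n + 1) / M n) ^ n) ^ ((n : ℝ))⁻¹ :=
      Real.rpow_le_rpow (hpos n).le key (by positivity)
    rwa [Real.mul_rpow (by positivity) (by positivity),
      Real.pow_rpow_inv_natCast hmn.le hn0,
      ← Real.rpow_natCast ε' q, ← Real.rpow_mul hε'pos.le] at h1
  -- exponent bound
  have hhalf : (1 : ℝ) / 2 ≤ (q : ℝ) * ((n : ℝ))⁻¹ := by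
    rw [← div_eq_mul_inv, le_div_iff₀ hnR]
    have h1 : (n : ℝ) < (q : ℝ) + (k : ℝ) := by exact_mod_cast hn_lt
    have h2 : (k : ℝ) ≤ (q : ℝ) := by exact_mod_cast hk_le
    linarith
  have hexp : ε' ^ ((q : ℝ) * ((n : ℝ))⁻¹) ≤ B⁻¹ := by
    calc ε' ^ ((q : ℝ) * ((n : ℝ))⁻¹) ≤ ε' ^ ((1 : ℝ) / 2) :=
        Real.rpow_le_rpow_of_exponent_ge hε'pos hε'le1 hhalf
      _ = B⁻¹ := by
        rw [hε'def, show (B ^ 2)⁻¹ = (B⁻¹) ^ (2 : ℕ) by rw [inv_pow],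
          ← Real.rpow_natCast (B⁻¹) 2, ← Real.rpow_mul (by positivity)]
        norm_num
  -- conclude
  have hrpos : 0 < M n ^ ((n : ℝ))⁻¹ := Real.rpow_pos_of_pos (hpos n) _
  rw [le_div_iff₀ hrpos]
  calc A * M n ^ ((n : ℝ))⁻¹
      ≤ B * (B⁻¹ * (M (n + 1) / M n)) := by
        apply mul_le_mul hAB _ hrpos.le (by positivity)
        calc M n ^ ((n : ℝ))⁻¹ ≤ ε' ^ ((q : ℝ) * ((n : ℝ))⁻¹) * (M (n + 1) / M n) := hroot
          _ ≤ B⁻¹ * (M (n + 1) / M n) := mul_le_mul_of_nonneg_right hexp hmn.le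
    _ = M (n + 1) / M n := by
        rw [← mul_assoc, mul_inv_cancel₀ hBpos.ne', one_mul]
end

section
/- Let M be a weight sequence and suppose lim_{n→∞} m_n/(M_n)^{1/n} = ∞. Then liminf_{n→∞} log(m_n)/log(n) = ∞, i.e. lim_{n→∞} log(m_n)/log(n) = ∞. -/
open Filter Finset

theorem ratio_tendsto_implies_omega_infinite (M : ℕ → ℝ)
    (hpos : ∀ p, 0 < M p) (hM0 : M 0 = 1)
    (hlc : ∀ p : ℕ, 1 ≤ p → (M p) ^ 2 ≤ M (p - 1) * M (p + 1))
    (hinf : Tendsto (fun p : ℕ => M (p + 1) / M p) atTop atTop)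
    (hratio : Tendsto (fun n : ℕ => (M (n + 1) / M n) / (M n) ^ ((n : ℝ))⁻¹) atTop atTop) :
    Tendsto (fun n : ℕ => Real.log (M (n + 1) / M n) / Real.log (n : ℝ)) atTop atTop := by
  set L : ℕ → ℝ := fun k => Real.log (M (k + 1) / M k) with hLdef
  have hLeq : ∀ k, L k = Real.log (M (k + 1)) - Real.log (M k) := by
    intro k
    simp only [hLdef]
    rw [Real.log_div (hpos _).ne' (hpos _).ne']
  -- log M n is the sum of the L k
  have hlogM : ∀ n, Real.log (M n) = ∑ k ∈ range n, L k := by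
    intro n
    induction n with
    | zero => simp [hM0]
    | succ n ih =>
      rw [Finset.sum_range_succ, ← ih, hLeq]
      ring
  set β : ℕ → ℝ := fun n => L n - Real.log (M n) / n with hβdef
  have hβ : Tendsto β atTop atTop := by
    have h := Real.tendsto_log_atTop.comp hratio
    refine h.congr fun n => ?_
    have h1 : (0:ℝ) < M (n + 1) / M n := div_pos (hpos _) (hpos _)
    have h2 : (0:ℝ) < (M n) ^ ((n : ℝ))⁻¹ := Real.rpow_pos_of_pos (hpos n) _
    simp only [Function.comp, hβdef, hLdef]
    rw [Real.log_div (ne_of_gt h1) (ne_of_gt h2), Real.log_rpow (hpos n)]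
    ring
  -- key identity
  have key : ∀ n, Real.log (M n) / n = ∑ k ∈ range n, β k / (k + 1) := by
    intro n
    induction n with
    | zero => simp [hM0]
    | succ n ih =>
      rw [Finset.sum_range_succ, ← ih]
      have hMn1 : Real.log (M (n + 1)) = Real.log (M n) + L n := by
        rw [hlogM (n + 1), hlogM n, Finset.sum_range_succ]
      rcases Nat.eq_zero_or_pos n with hn | hn
      · subst hn
        simp [hβdef, hM0, hMn1]
      · have hn0 : (n : ℝ) ≠ 0 := Nat.cast_ne_zero.mpr hn.ne'
        have hn1 : ((n : ℝ) + 1) ≠ 0 := by positivity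
        simp only [hβdef, hMn1]
        push_cast
        field_simp
        ring
  -- the real harmonic numbers
  set H : ℕ → ℝ := fun n => ∑ k ∈ range n, ((k : ℝ) + 1)⁻¹ with hHdef
  have hHcast : ∀ n, ((harmonic n : ℚ) : ℝ) = H n := by
    intro n
    simp only [harmonic, hHdef]
    push_cast
    rfl
  have hlogH : ∀ n : ℕ, Real.log n ≤ H n := by
    intro n
    have h1 : Real.log (n : ℝ) ≤ Real.log (((n + 1 : ℕ) : ℝ)) := by
      rcases Nat.eq_zero_or_pos n with h | h
      · simp [h]
      · exact Real.log_le_log (by exact_mod_cast h) (by push_cast; linarith)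
    calc Real.log (n : ℝ) ≤ Real.log (((n + 1 : ℕ) : ℝ)) := h1
      _ ≤ ((harmonic n : ℚ) : ℝ) := log_add_one_le_harmonic n
      _ = H n := hHcast n
  have hlogn : Tendsto (fun n : ℕ => Real.log (n : ℝ)) atTop atTop :=
    Real.tendsto_log_atTop.comp tendsto_natCast_atTop_atTop
  clear_value L β H
  rw [tendsto_atTop]
  intro b
  obtain ⟨A, hAb, hA0⟩ : ∃ A : ℝ, b + 1 ≤ A ∧ 0 ≤ A :=
    ⟨max b 0 + 1, by have := le_max_left b 0; linarith, by positivity⟩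
  obtain ⟨N, hN⟩ := eventually_atTop.mp (tendsto_atTop.mp hβ A)
  obtain ⟨C, hCdef⟩ : ∃ C : ℝ, C = ∑ k ∈ range N, β k / (k + 1) := ⟨_, rfl⟩
  obtain ⟨D, hDdef⟩ : ∃ D : ℝ, D = A * H N - C := ⟨_, rfl⟩
  filter_upwards [eventually_ge_atTop N, hlogn.eventually_ge_atTop 1,
    hlogn.eventually_ge_atTop (D - A)] with n hn1 hn2 hn3
  have hlogpos : (0:ℝ) < Real.log n := lt_of_lt_of_le one_pos hn2
  -- lower bound on the averaged sum
  have hsplit : ∑ k ∈ range n, β k / (k + 1)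
      = C + ∑ k ∈ Ico N n, β k / (k + 1) := by
    rw [hCdef, Finset.sum_range_add_sum_Ico _ hn1]
  have hterm : ∀ k ∈ Ico N n, A * ((k : ℝ) + 1)⁻¹ ≤ β k / (k + 1) := by
    intro k hk
    have hkN : N ≤ k := (Finset.mem_Ico.mp hk).1
    have hk1 : (0:ℝ) < (k : ℝ) + 1 := by positivity
    rw [mul_inv_le_iff₀ hk1, div_mul_cancel₀ _ (ne_of_gt hk1)]
    exact hN k hkN
  have hsum : ∑ k ∈ Ico N n, A * ((k : ℝ) + 1)⁻¹ = A * (H n - H N) := by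
    rw [← Finset.mul_sum, Finset.sum_Ico_eq_sub _ hn1]
    simp only [hHdef]
  have hlow : A * (H n - H N) ≤ ∑ k ∈ Ico N n, β k / (k + 1) := by
    rw [← hsum]; exact Finset.sum_le_sum hterm
  have hexp : A * (H n - H N) = A * H n - A * H N := by ring
  have h2 : A * Real.log n ≤ A * H n := mul_le_mul_of_nonneg_left (hlogH n) hA0
  have hMlow : A * Real.log n - D ≤ Real.log (M n) / n := by
    rw [key n, hsplit, hDdef]
    linarith
  have hLn : L n = β n + Real.log (M n) / n := by simp [hβdef]
  have hβn : A ≤ β n := hN n hn1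
  have hLlow : A * Real.log n + (A - D) ≤ L n := by
    rw [hLn]; linarith
  have hprod : (b + 1) * Real.log n ≤ A * Real.log n :=
    mul_le_mul_of_nonneg_right hAb (le_of_lt hlogpos)
  rw [le_div_iff₀ hlogpos]
  have hgoal : Real.log (M (n + 1) / M n) = L n := by rw [hLdef]
  rw [hgoal]
  nlinarith [hLlow, hprod, hn3, hlogpos]
end

section
/- There exists a weight sequence M (with q > 1 fixed, m_{n-1} = q^{2n+1} if n is not of the form 2^k + 1, and m_{n-1} = q^{2n-1} if n = 2^k + 1 for some k ≥ 0) such that the sequence (m_{n-1}/n)_{n≥1} is not eventually increasing, while (m_n/n^r)_{n≥1} is almost increasing for every natural number r. -/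
/-!
At `n = 2 ^ k` with `k ≥ 2`, the index `n` is a power of two but `n - 1` is not, so
`m (n - 1) = m n = q ^ (2 n + 1)` and `m (n - 1) / n > m n / (n + 1)`: the sequence drops
infinitely often. On the other hand `q ^ (2 p + 1) ≤ m p ≤ q ^ 2 * q ^ (2 p + 1)`, so
`m p / p ^ r` is comparable to `(q ^ 2) ^ p / p ^ r`; a geometric sequence divided by a
polynomial is almost increasing because `(p + d) ^ r ≤ p ^ r (d + 1) ^ r` and `(d + 1) ^ r`
is dominated by `C x ^ (d + 1)`.
-/

open scoped Classical in
/-- The quotient sequence of the example: `m p` (which is `m_{n-1}` for `n = p + 1`)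
equals `q ^ (2 p + 1)` if `p = 2 ^ k` for some `k` (i.e. `n = 2 ^ k + 1`),
and `q ^ (2 p + 3)` otherwise. -/
noncomputable def exampleQuot (q : ℝ) (p : ℕ) : ℝ :=
  if ∃ k : ℕ, p = 2 ^ k then q ^ (2 * p + 1) else q ^ (2 * p + 3)

def AlmostIncreasing (c : ℕ → ℝ) : Prop :=
  ∃ a > (0 : ℝ), ∀ p q : ℕ, 1 ≤ p → p ≤ q → c p ≤ a * c q

lemma AlmostIncreasing.of_le_of_le_mul {c d : ℕ → ℝ} {K : ℝ} (hd : AlmostIncreasing d)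
    (hK : 0 < K) (hdc : ∀ p, d p ≤ c p) (hcd : ∀ p, c p ≤ K * d p) : AlmostIncreasing c := by
  obtain ⟨a, ha, hmono⟩ := hd
  refine ⟨K * a, by positivity, fun p q hp hpq => ?_⟩
  calc c p ≤ K * d p := hcd p
    _ ≤ K * (a * d q) := by gcongr; exact hmono p q hp hpq
    _ ≤ K * a * c q := by rw [mul_assoc]; gcongr; exact hdc q

lemma exists_pos_natCast_pow_le_mul_pow {x : ℝ} (hx : 1 < x) (r : ℕ) :
    ∃ C > (0 : ℝ), ∀ k : ℕ, (k : ℝ) ^ r ≤ C * x ^ k := by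
  obtain ⟨C, hC⟩ := (tendsto_pow_const_div_const_pow_of_one_lt r hx).bddAbove_range
  refine ⟨max C 1, by positivity, fun k => ?_⟩
  have hbound : (k : ℝ) ^ r / x ^ k ≤ max C 1 :=
    (hC (Set.mem_range_self k)).trans (le_max_left _ _)
  rwa [div_le_iff₀ (by positivity)] at hbound

lemma almostIncreasing_pow_div_natCast_pow {x : ℝ} (hx : 1 < x) (r : ℕ) :
    AlmostIncreasing fun p => x ^ p / (p : ℝ) ^ r := by
  obtain ⟨C, hC, hpoly⟩ := exists_pos_natCast_pow_le_mul_pow hx r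
  refine ⟨C * x, by positivity, fun p q hp hpq => ?_⟩
  obtain ⟨d, rfl⟩ := Nat.exists_eq_add_of_le hpq
  have hp' : (1 : ℝ) ≤ p := by exact_mod_cast hp
  have hsum : ((p + d : ℕ) : ℝ) ^ r ≤ (p : ℝ) ^ r * (C * x ^ (d + 1)) :=
    calc ((p + d : ℕ) : ℝ) ^ r ≤ ((p : ℝ) * ((d + 1 : ℕ) : ℝ)) ^ r := by
          gcongr; push_cast; nlinarith
      _ ≤ (p : ℝ) ^ r * (C * x ^ (d + 1)) := by rw [mul_pow]; gcongr; exact hpoly _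
  rw [← mul_div_assoc, div_le_div_iff₀ (by positivity) (by positivity)]
  calc x ^ p * ((p + d : ℕ) : ℝ) ^ r ≤ x ^ p * ((p : ℝ) ^ r * (C * x ^ (d + 1))) := by gcongr
    _ = C * x * x ^ (p + d) * (p : ℝ) ^ r := by ring

lemma pow_le_exampleQuot {q : ℝ} (hq : 1 ≤ q) (p : ℕ) : q ^ (2 * p + 1) ≤ exampleQuot q p := by
  unfold exampleQuot
  split_ifs
  · rfl
  · exact pow_le_pow_right₀ hq (by omega)

lemma exampleQuot_le_sq_mul_pow {q : ℝ} (hq : 1 ≤ q) (p : ℕ) :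
    exampleQuot q p ≤ q ^ 2 * q ^ (2 * p + 1) := by
  rw [← pow_add]
  unfold exampleQuot
  split_ifs
  · exact pow_le_pow_right₀ hq (by omega)
  · exact le_of_eq (by ring_nf)

lemma almostIncreasing_exampleQuot_div_natCast_pow {q : ℝ} (hq : 1 < q) (r : ℕ) :
    AlmostIncreasing fun p => exampleQuot q p / (p : ℝ) ^ r := by
  refine (almostIncreasing_pow_div_natCast_pow (one_lt_pow₀ hq two_ne_zero) r).of_le_of_le_mul
    (K := q ^ 3) (by positivity) (fun p => ?_) (fun p => ?_)
  · calc (q ^ 2) ^ p / (p : ℝ) ^ r ≤ q ^ (2 * p + 1) / (p : ℝ) ^ r := by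
          rw [← pow_mul]; gcongr; exacts [hq.le, by omega]
      _ ≤ exampleQuot q p / (p : ℝ) ^ r := by gcongr; exact pow_le_exampleQuot hq.le p
  · calc exampleQuot q p / (p : ℝ) ^ r ≤ q ^ 2 * q ^ (2 * p + 1) / (p : ℝ) ^ r := by
          gcongr; exact exampleQuot_le_sq_mul_pow hq.le p
      _ = q ^ 3 * ((q ^ 2) ^ p / (p : ℝ) ^ r) := by ring

lemma two_pow_sub_one_ne_two_pow {k : ℕ} (hk : 2 ≤ k) (j : ℕ) : 2 ^ k - 1 ≠ 2 ^ j := by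
  intro h
  obtain ⟨i, rfl⟩ := Nat.exists_eq_add_of_le hk
  rcases j with _ | j
  · have : 4 ≤ 2 ^ (2 + i) := by
      calc 4 = 2 ^ 2 := rfl
        _ ≤ 2 ^ (2 + i) := Nat.pow_le_pow_right two_pos (by omega)
    omega
  · have hj : 1 ≤ 2 ^ j := Nat.one_le_two_pow
    rw [pow_succ, pow_add] at h
    norm_num at h
    omega

lemma exampleQuot_two_pow (q : ℝ) (k : ℕ) : exampleQuot q (2 ^ k) = q ^ (2 * 2 ^ k + 1) :=
  if_pos ⟨k, rfl⟩

lemma exampleQuot_two_pow_sub_one (q : ℝ) {k : ℕ} (hk : 2 ≤ k) :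
    exampleQuot q (2 ^ k - 1) = q ^ (2 * 2 ^ k + 1) := by
  have hpos : 1 ≤ 2 ^ k := Nat.one_le_two_pow
  rw [exampleQuot, if_neg fun ⟨j, hj⟩ => two_pow_sub_one_ne_two_pow hk j hj]
  congr 1
  omega

lemma exampleQuot_two_pow_div_succ_lt {q : ℝ} (hq : 0 < q) {k : ℕ} (hk : 2 ≤ k) :
    exampleQuot q (2 ^ k) / ((2 ^ k : ℕ) + 1 : ℝ) <
      exampleQuot q (2 ^ k - 1) / ((2 ^ k : ℕ) : ℝ) := by
  rw [exampleQuot_two_pow, exampleQuot_two_pow_sub_one q hk]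
  gcongr
  linarith

theorem example_not_eventually_increasing_but_almost_increasing (q : ℝ) (hq : 1 < q) :
    (¬ ∃ N : ℕ, 1 ≤ N ∧ ∀ n : ℕ, N ≤ n →
        exampleQuot q (n - 1) / (n : ℝ) ≤ exampleQuot q n / ((n : ℝ) + 1)) ∧
    (∀ r : ℕ, ∃ a > (0 : ℝ), ∀ p q' : ℕ, 1 ≤ p → p ≤ q' →
        exampleQuot q p / (p : ℝ) ^ r ≤ a * (exampleQuot q q' / (q' : ℝ) ^ r)) := by
  refine ⟨fun ⟨N, _, hN⟩ => ?_, almostIncreasing_exampleQuot_div_natCast_pow hq⟩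
  have hN_le : N ≤ 2 ^ (N + 2) := (Nat.lt_two_pow_self.trans_le
    (Nat.pow_le_pow_right two_pos (by omega))).le
  exact (hN _ hN_le).not_gt
    (exampleQuot_two_pow_div_succ_lt (one_pos.trans hq) (by omega : 2 ≤ N + 2))
end
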